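/- Let Γ be a quasi-Fuchsian group with limit circle Λ, and define the lifted trapped set K̃ := {(x,v) ∈ T¹AdS₃ : there exist ν, ν' ∈ Λ and λ, λ' > 0 with x + v = λ·ν and x − v = λ'·ν'}. Then the diagonal action of Γ on K̃ is cocompact: there exists a compact subset L ⊆ K̃ with Γ·L = K̃. -/

import Mathlib

noncomputable section

/-- The bilinear form `q(x,y) = -x₁y₁ - x₂y₂ + x₃y₃ + x₄y₄` on `ℝ⁴`. -/
def qf (x y : Fin 4 → ℝ) : ℝ := -(x 0 * y 0) - x 1 * y 1 + x 2 * y 2 + x 3 * y 3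

/-- The identification `ℂ × ℂ ≅ ℝ⁴`, `(w, z) ↦ (Re w, Im w, Re z, Im z)`. -/
def toR4 (p : ℂ × ℂ) : Fin 4 → ℝ := ![p.1.re, p.1.im, p.2.re, p.2.im]

/-- An acausal circle: the graph `{(F(z), z) : z ∈ S¹}` of a distance-decreasing map
`F : S¹ → S¹`, viewed inside `ℝ⁴`. -/
def IsAcausalCircle (Λ : Set (Fin 4 → ℝ)) : Prop :=
  ∃ F : ℂ → ℂ,
    (∀ z : ℂ, ‖z‖ = 1 → ‖F z‖ = 1) ∧
    (∀ z z' : ℂ, ‖z‖ = 1 → ‖z'‖ = 1 → z ≠ z' →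
      ‖F z - F z'‖ < ‖z - z'‖) ∧
    Λ = {x | ∃ z : ℂ, ‖z‖ = 1 ∧ x = toR4 (F z, z)}

/-- The invisible domain `O₊(Λ) = {x ∈ AdS₃ : q(x,ν) < 0 for all ν ∈ Λ}`. -/
def invisible (Λ : Set (Fin 4 → ℝ)) : Set (Fin 4 → ℝ) :=
  {x | qf x x = -1 ∧ ∀ ν ∈ Λ, qf x ν < 0}

/-- The group of linear automorphisms of `ℝ⁴`. -/
abbrev GL4 := (Fin 4 → ℝ) ≃ₗ[ℝ] (Fin 4 → ℝ)

/-- A linear automorphism preserves the bilinear form `q`. -/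
def PreservesQ (γ : GL4) : Prop := ∀ u w : Fin 4 → ℝ, qf (γ u) (γ w) = qf u w

/-- The positive cone over a set `Λ ⊆ ℝ⁴`. -/
def qcone (Λ : Set (Fin 4 → ℝ)) : Set (Fin 4 → ℝ) :=
  {x | ∃ lam : ℝ, 0 < lam ∧ ∃ ν ∈ Λ, x = lam • ν}

/-- The convex hull `C(Λ) ⊆ AdS₃` of an acausal circle `Λ`:
`{x/√(-q(x)) : x ∈ convexHull(Λ), q(x) < 0}`. -/
def convexCore (Λ : Set (Fin 4 → ℝ)) : Set (Fin 4 → ℝ) :=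
  {y | ∃ x ∈ convexHull ℝ Λ, qf x x < 0 ∧ y = (Real.sqrt (-(qf x x)))⁻¹ • x}

/-- A subgroup `Γ` of the linear automorphisms of `ℝ⁴` preserving `q` is quasi-Fuchsian
with limit circle `Λ` if `Λ` is an acausal circle whose positive cone is `Γ`-invariant and
the action of `Γ` on the convex hull `C(Λ)` is free, properly discontinuous and
cocompact. -/
def IsQuasiFuchsian (Γ : Subgroup GL4) (Λ : Set (Fin 4 → ℝ)) : Prop :=
  IsAcausalCircle Λ ∧
  (∀ γ ∈ Γ, PreservesQ γ) ∧
  (∀ γ ∈ Γ, (⇑γ) '' qcone Λ = qcone Λ) ∧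
  (∀ γ ∈ Γ, ∀ x ∈ convexCore Λ, γ x = x → γ = 1) ∧
  (∀ K L : Set (Fin 4 → ℝ), K ⊆ convexCore Λ → L ⊆ convexCore Λ →
    IsCompact K → IsCompact L →
    {γ : GL4 | γ ∈ Γ ∧ (((⇑γ) '' K) ∩ L).Nonempty}.Finite) ∧
  (∃ L₀ : Set (Fin 4 → ℝ), L₀ ⊆ convexCore Λ ∧ IsCompact L₀ ∧
    (⋃ γ ∈ Γ, (⇑γ) '' L₀) = convexCore Λ)


/-- The lifted trapped set `K̃ ⊆ T¹AdS₃`: space-like unit tangent vectors whose geodesic has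
both endpoints (the rays through `x + v` and `x - v`) in the limit circle `Λ`. -/
def Ktilde (Λ : Set (Fin 4 → ℝ)) : Set ((Fin 4 → ℝ) × (Fin 4 → ℝ)) :=
  {p | qf p.1 p.1 = -1 ∧ qf p.1 p.2 = 0 ∧ qf p.2 p.2 = 1 ∧
    (∃ ν ∈ Λ, ∃ lam : ℝ, 0 < lam ∧ p.1 + p.2 = lam • ν) ∧
    (∃ ν' ∈ Λ, ∃ lam' : ℝ, 0 < lam' ∧ p.1 - p.2 = lam' • ν')}


/-!
If `(x, v) ∈ K̃` with `x ± v = λ± ν±`, then `x` is a positive multiple of a convex combination of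
`ν₊` and `ν₋`, so `x ∈ C(Λ)`; translating by `Γ` we may therefore assume that `x` lies in a compact
fundamental set `L₀ ⊆ C(Λ)`. Since `q(ν, ν) = 0` and `q(ν, ν') < 0` for distinct `ν, ν' ∈ Λ`, every
time-like `w` in the convex hull of `Λ` has `q(w, ν) < 0`; hence `q(x, ν) < 0` on the compact set
`L₀ × Λ`, and `-q(x, ν)` stays in some `[ε, ε⁻¹]`. Pairing `x ± v = λ± ν±` with `x` gives
`λ± q(x, ν±) = -1`, so `λ±` lies in `[ε, ε⁻¹]` as well, and `x ± v` ranges over the compact set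
`[ε, ε⁻¹] • Λ`.
-/

open Set
open scoped Pointwise

def qfBilin : (Fin 4 → ℝ) →ₗ[ℝ] (Fin 4 → ℝ) →ₗ[ℝ] ℝ :=
  LinearMap.mk₂ ℝ qf
    (fun _ _ _ => by simp only [qf, Pi.add_apply]; ring)
    (fun _ _ _ => by simp only [qf, Pi.smul_apply, smul_eq_mul]; ring)
    (fun _ _ _ => by simp only [qf, Pi.add_apply]; ring)
    (fun _ _ _ => by simp only [qf, Pi.smul_apply, smul_eq_mul]; ring)

@[simp] lemma qfBilin_apply (x y : Fin 4 → ℝ) : qfBilin x y = qf x y := rfl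

lemma qf_smul_smul (a b : ℝ) (x y : Fin 4 → ℝ) : qf (a • x) (b • y) = a * b * qf x y := by
  simp only [← qfBilin_apply, map_smul, LinearMap.smul_apply, smul_eq_mul]; ring

@[fun_prop]
lemma Continuous.qf {α : Type*} [TopologicalSpace α] {f g : α → Fin 4 → ℝ} (hf : Continuous f)
    (hg : Continuous g) : Continuous fun a => qf (f a) (g a) := by
  unfold _root_.qf; fun_prop

lemma continuous_toR4 : Continuous toR4 := by
  refine continuous_pi fun i => ?_
  fin_cases i <;> simp only [toR4] <;> simp <;> fun_prop

lemma two_mul_qf_toR4 {w z w' z' : ℂ} (hw : ‖w‖ = 1) (hz : ‖z‖ = 1) (hw' : ‖w'‖ = 1)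
    (hz' : ‖z'‖ = 1) :
    2 * qf (toR4 (w, z)) (toR4 (w', z')) = ‖w - w'‖ ^ 2 - ‖z - z'‖ ^ 2 := by
  have hre (a b : ℂ) : 2 * (a.re * b.re + a.im * b.im) = ‖a‖ ^ 2 + ‖b‖ ^ 2 - ‖a - b‖ ^ 2 := by
    simp only [Complex.sq_norm, Complex.normSq_sub, Complex.mul_re, Complex.conj_re,
      Complex.conj_im]
    ring
  have h := congrArg₂ (· - ·) (hre z z') (hre w w')
  simp only [hw, hz, hw', hz'] at h
  simp only [qf, toR4, Matrix.cons_val]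
  linarith

namespace IsAcausalCircle

variable {Λ : Set (Fin 4 → ℝ)}

lemma qf_self_eq_zero (hΛ : IsAcausalCircle Λ) {ν : Fin 4 → ℝ} (hν : ν ∈ Λ) : qf ν ν = 0 := by
  obtain ⟨F, hF, -, rfl⟩ := hΛ
  obtain ⟨z, hz, rfl⟩ := hν
  have := two_mul_qf_toR4 (hF z hz) hz (hF z hz) hz
  simp only [sub_self, norm_zero] at this
  linarith

lemma qf_neg_of_ne (hΛ : IsAcausalCircle Λ) {ν ν' : Fin 4 → ℝ} (hν : ν ∈ Λ) (hν' : ν' ∈ Λ)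
    (hne : ν ≠ ν') : qf ν ν' < 0 := by
  obtain ⟨F, hF, hlip, rfl⟩ := hΛ
  obtain ⟨z, hz, rfl⟩ := hν
  obtain ⟨z', hz', rfl⟩ := hν'
  have hzz' : z ≠ z' := by rintro rfl; exact hne rfl
  have := two_mul_qf_toR4 (hF z hz) hz (hF z' hz') hz'
  have := hlip z z' hz hz' hzz'
  nlinarith [norm_nonneg (F z - F z')]

lemma isCompact (hΛ : IsAcausalCircle Λ) : IsCompact Λ := by
  obtain ⟨F, hF, hlip, rfl⟩ := hΛ
  have hFcont : ContinuousOn F (Metric.sphere 0 1) :=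
    (LipschitzOnWith.of_dist_le' (K := 1) fun z hz z' hz' => by
      rcases eq_or_ne z z' with rfl | hne
      · simp
      · simpa [dist_eq_norm] using
          (hlip z z' (by simpa using hz) (by simpa using hz') hne).le).continuousOn
  convert (isCompact_sphere (0 : ℂ) 1).image_of_continuousOn
    (continuous_toR4.comp_continuousOn (hFcont.prodMk continuousOn_id))
  ext x
  simp [eq_comm]

end IsAcausalCircle

lemma convex_setOf_neg_union_singleton {E : Type*} [AddCommGroup E] [Module ℝ E]
    (f : E →ₗ[ℝ] ℝ) {ν : E} (hν : f ν = 0) : Convex ℝ ({w | f w < 0} ∪ {ν}) := by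
  intro a ha b hb s t hs ht hst
  have hcomb : f (s • a + t • b) = s * f a + t * f b := by simp
  rcases ha with (ha : f a < 0) | rfl <;> rcases hb with (hb : f b < 0) | rfl
  · left; show f _ < 0
    rcases hs.eq_or_lt with rfl | hs
    · rw [zero_add] at hst; simpa [hst] using hb
    · rw [hcomb]; nlinarith [mul_nonpos_of_nonneg_of_nonpos ht hb.le, mul_neg_of_pos_of_neg hs ha]
  · rcases hs.eq_or_lt with rfl | hs
    · rw [zero_add] at hst; right; simp [hst]
    · left; show f _ < 0
      rw [hcomb, hν]; nlinarith [mul_neg_of_pos_of_neg hs ha]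
  · rcases ht.eq_or_lt with rfl | ht
    · rw [add_zero] at hst; right; simp [hst]
    · left; show f _ < 0
      rw [hcomb, hν]; nlinarith [mul_neg_of_pos_of_neg ht hb]
  · right; rw [← add_smul, hst, one_smul]; rfl

section ConvexCore

variable {Λ : Set (Fin 4 → ℝ)}

lemma qf_neg_of_mem_convexHull (hΛ : IsAcausalCircle Λ) {w ν : Fin 4 → ℝ}
    (hw : w ∈ convexHull ℝ Λ) (hww : qf w w < 0) (hν : ν ∈ Λ) : qf w ν < 0 := by
  have hsub : Λ ⊆ {w | qfBilin.flip ν w < 0} ∪ {ν} := fun ν' hν' => by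
    rcases eq_or_ne ν' ν with rfl | hne
    · exact Or.inr rfl
    · exact Or.inl (hΛ.qf_neg_of_ne hν' hν hne)
  rcases convexHull_min hsub
    (convex_setOf_neg_union_singleton _ (hΛ.qf_self_eq_zero hν)) hw with h | rfl
  · exact h
  · exact absurd (hΛ.qf_self_eq_zero hν) hww.ne

lemma qf_neg_of_mem_convexCore (hΛ : IsAcausalCircle Λ) {x ν : Fin 4 → ℝ}
    (hx : x ∈ convexCore Λ) (hν : ν ∈ Λ) : qf x ν < 0 := by
  obtain ⟨w, hw, hww, rfl⟩ := hx
  simpa [← qfBilin_apply] using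
    mul_neg_of_pos_of_neg (inv_pos.2 (Real.sqrt_pos.2 (neg_pos.2 hww)))
      (qf_neg_of_mem_convexHull hΛ hw hww hν)

lemma smul_mem_convexCore {w : Fin 4 → ℝ} {t : ℝ} (hw : w ∈ convexHull ℝ Λ) (ht : 0 < t)
    (hq : qf (t • w) (t • w) = -1) : t • w ∈ convexCore Λ := by
  rw [qf_smul_smul] at hq
  have hww : qf w w = -(t⁻¹ ^ 2) := by field_simp; linarith
  refine ⟨w, hw, by rw [hww]; exact neg_neg_of_pos (by positivity), ?_⟩
  rw [hww, neg_neg, Real.sqrt_sq (by positivity), inv_inv]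

end ConvexCore

/-- `T¹AdS₃`. -/
def unitTangent : Set ((Fin 4 → ℝ) × (Fin 4 → ℝ)) :=
  {p | qf p.1 p.1 = -1 ∧ qf p.1 p.2 = 0 ∧ qf p.2 p.2 = 1}

lemma isClosed_unitTangent : IsClosed unitTangent :=
  (isClosed_eq (by fun_prop) continuous_const).inter
    ((isClosed_eq (by fun_prop) continuous_const).inter
      (isClosed_eq (by fun_prop) continuous_const))

section Ktilde

variable {Λ : Set (Fin 4 → ℝ)}

lemma Ktilde_eq :
    Ktilde Λ = {p | p ∈ unitTangent ∧ p.1 + p.2 ∈ qcone Λ ∧ p.1 - p.2 ∈ qcone Λ} := by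
  ext p
  simp only [Ktilde, unitTangent, qcone]
  grind

lemma fst_mem_convexCore_of_mem_Ktilde {p : (Fin 4 → ℝ) × (Fin 4 → ℝ)} (hp : p ∈ Ktilde Λ) :
    p.1 ∈ convexCore Λ := by
  obtain ⟨hx, -, -, ⟨ν, hν, a, ha, hplus⟩, ⟨ν', hν', b, hb, hminus⟩⟩ := hp
  have hab : 0 < a + b := add_pos ha hb
  have hw : (a / (a + b)) • ν + (b / (a + b)) • ν' ∈ convexHull ℝ Λ :=
    convex_convexHull ℝ Λ (subset_convexHull ℝ Λ hν) (subset_convexHull ℝ Λ hν')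
      (by positivity) (by positivity) (by field_simp)
  have hx_eq : p.1 = ((a + b) / 2) • ((a / (a + b)) • ν + (b / (a + b)) • ν') := by
    have ha' : (a + b) / 2 * (a / (a + b)) = 2⁻¹ * a := by field_simp
    have hb' : (a + b) / 2 * (b / (a + b)) = 2⁻¹ * b := by field_simp
    rw [smul_add, smul_smul, smul_smul, ha', hb', ← smul_smul, ← smul_smul, ← hplus, ← hminus]
    module
  rw [hx_eq] at hx ⊢
  exact smul_mem_convexCore hw (by positivity) hx

lemma map_mem_Ktilde {γ : GL4} (hγq : PreservesQ γ) (hγΛ : (⇑γ) '' qcone Λ = qcone Λ)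
    {p : (Fin 4 → ℝ) × (Fin 4 → ℝ)} (hp : p ∈ Ktilde Λ) : (γ p.1, γ p.2) ∈ Ktilde Λ := by
  rw [Ktilde_eq] at hp ⊢
  obtain ⟨⟨hx, hxv, hv⟩, hplus, hminus⟩ := hp
  refine ⟨⟨by rw [hγq, hx], by rw [hγq, hxv], by rw [hγq, hv]⟩, ?_, ?_⟩
  · rw [← map_add, ← hγΛ]; exact mem_image_of_mem _ hplus
  · rw [← map_sub, ← hγΛ]; exact mem_image_of_mem _ hminus

lemma smul_qf_eq_neg_one {x v ν : Fin 4 → ℝ} {t : ℝ} (hx : qf x x = -1) (hxv : qf x v = 0)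
    (h : x + v = t • ν) : t * qf x ν = -1 := by
  have := congrArg (qfBilin x) h
  simp only [map_add, map_smul, qfBilin_apply, smul_eq_mul, hx, hxv] at this
  linarith

end Ktilde

lemma IsCompact.exists_subset_Icc_inv {K : Set ℝ} (hK : IsCompact K) (hpos : K ⊆ Ioi 0) :
    ∃ ε > 0, K ⊆ Icc ε ε⁻¹ := by
  rcases K.eq_empty_or_nonempty with rfl | hne
  · exact ⟨1, one_pos, empty_subset _⟩
  have hinf : 0 < sInf K := hpos (hK.sInf_mem hne)
  have hsup : 0 < sSup K := hpos (hK.sSup_mem hne)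
  refine ⟨min (sInf K) (sSup K)⁻¹, lt_min hinf (inv_pos.2 hsup), fun x hx => ⟨?_, ?_⟩⟩
  · exact (min_le_left _ _).trans (csInf_le hK.bddBelow hx)
  · calc x ≤ sSup K := le_csSup hK.bddAbove hx
      _ ≤ (min (sInf K) (sSup K)⁻¹)⁻¹ := by
        rw [le_inv_comm₀ hsup (lt_min hinf (inv_pos.2 hsup))]; exact min_le_right _ _

lemma inv_mem_Icc_self {ε t : ℝ} (hε : 0 < ε) (ht : t ∈ Icc ε ε⁻¹) : t⁻¹ ∈ Icc ε ε⁻¹ :=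
  ⟨(le_inv_comm₀ hε (hε.trans_le ht.1)).2 ht.2, inv_anti₀ hε ht.1⟩

lemma isCompact_setOf_add_mem_sub_mem {E : Type*} [AddCommGroup E] [Module ℝ E]
    [TopologicalSpace E] [IsTopologicalAddGroup E] [ContinuousSMul ℝ E] {A B : Set E}
    (hA : IsCompact A) (hB : IsCompact B) :
    IsCompact {p : E × E | p.1 + p.2 ∈ A ∧ p.1 - p.2 ∈ B} := by
  let sumDiff (p : E × E) : E × E := (p.1 + p.2, p.1 - p.2)
  let halfSumDiff (q : E × E) : E × E := ((2 : ℝ)⁻¹ • (q.1 + q.2), (2 : ℝ)⁻¹ • (q.1 - q.2))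
  have hinv : sumDiff ⁻¹' (A ×ˢ B) = halfSumDiff '' (A ×ˢ B) :=
    (congrFun (image_eq_preimage_of_inverse (g := sumDiff)
      (fun _ => by ext <;> simp only [sumDiff, halfSumDiff] <;> module)
      (fun _ => by ext <;> simp only [sumDiff, halfSumDiff] <;> module)) _).symm
  change IsCompact (sumDiff ⁻¹' (A ×ˢ B))
  exact hinv ▸ (hA.prod hB).image (by fun_prop)

lemma add_mem_Icc_smul_of_mem_qcone {Λ : Set (Fin 4 → ℝ)} {x v : Fin 4 → ℝ} {ε : ℝ} (hε : 0 < ε)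
    (hqε : ∀ ν ∈ Λ, -qf x ν ∈ Icc ε ε⁻¹) (hx : qf x x = -1) (hxv : qf x v = 0)
    (hcone : x + v ∈ qcone Λ) : x + v ∈ Icc ε ε⁻¹ • Λ := by
  obtain ⟨t, -, ν, hν, h⟩ := hcone
  have ht : t = (-qf x ν)⁻¹ :=
    eq_inv_of_mul_eq_one_left (by linarith [smul_qf_eq_neg_one hx hxv h])
  exact h ▸ smul_mem_smul (ht ▸ inv_mem_Icc_self hε (hqε ν hν)) hν

lemma isCompact_Ktilde_inter_fst_preimage {Λ L₀ : Set (Fin 4 → ℝ)} (hΛ : IsCompact Λ)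
    (hL₀ : IsCompact L₀) (hneg : ∀ x ∈ L₀, ∀ ν ∈ Λ, qf x ν < 0) :
    IsCompact (Ktilde Λ ∩ Prod.fst ⁻¹' L₀) := by
  have hcont : Continuous fun p : (Fin 4 → ℝ) × (Fin 4 → ℝ) => -qf p.1 p.2 := by fun_prop
  obtain ⟨ε, hε, hqε⟩ := ((hL₀.prod hΛ).image hcont).exists_subset_Icc_inv
    (by rintro _ ⟨⟨x, ν⟩, ⟨hx, hν⟩, rfl⟩; exact neg_pos.2 (hneg x hx ν hν))
  set A := Icc ε ε⁻¹ • Λ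
  have hAcone : A ⊆ qcone Λ := by
    rintro _ ⟨t, ht, ν, hν, rfl⟩
    exact ⟨t, hε.trans_le ht.1, ν, hν, rfl⟩
  have heq : Ktilde Λ ∩ Prod.fst ⁻¹' L₀ =
      {p | p.1 + p.2 ∈ A ∧ p.1 - p.2 ∈ A} ∩ (unitTangent ∩ Prod.fst ⁻¹' L₀) := by
    ext p
    rw [Ktilde_eq]
    constructor
    · rintro ⟨⟨hT, hplus, hminus⟩, hL⟩
      have hqε' : ∀ ν ∈ Λ, -qf p.1 ν ∈ Icc ε ε⁻¹ := fun ν hν => hqε ⟨(p.1, ν), ⟨hL, hν⟩, rfl⟩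
      have hxv : qf p.1 (-p.2) = 0 := by simpa [← qfBilin_apply] using hT.2.1
      refine ⟨⟨add_mem_Icc_smul_of_mem_qcone hε hqε' hT.1 hT.2.1 hplus, ?_⟩, hT, hL⟩
      rw [sub_eq_add_neg] at hminus ⊢
      exact add_mem_Icc_smul_of_mem_qcone hε hqε' hT.1 hxv hminus
    · rintro ⟨⟨hplus, hminus⟩, hT, hL⟩
      exact ⟨⟨hT, hAcone hplus, hAcone hminus⟩, hL⟩
  have hA : IsCompact A := isCompact_Icc.smul_set hΛ
  rw [heq]
  exact (isCompact_setOf_add_mem_sub_mem hA hA).inter_right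
    (isClosed_unitTangent.inter (hL₀.isClosed.preimage continuous_fst))

lemma orbit_Ktilde_inter_fst_preimage {Γ : Subgroup GL4} {Λ L₀ : Set (Fin 4 → ℝ)}
    (hq : ∀ γ ∈ Γ, PreservesQ γ) (hcone : ∀ γ ∈ Γ, (⇑γ) '' qcone Λ = qcone Λ)
    (hcover : ⋃ γ ∈ Γ, (⇑γ) '' L₀ = convexCore Λ) :
    {p : (Fin 4 → ℝ) × (Fin 4 → ℝ) |
      ∃ γ ∈ Γ, ∃ p' ∈ Ktilde Λ ∩ Prod.fst ⁻¹' L₀, p = (γ p'.1, γ p'.2)} = Ktilde Λ := by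
  ext p
  constructor
  · rintro ⟨γ, hγ, p', hp', rfl⟩
    exact map_mem_Ktilde (hq γ hγ) (hcone γ hγ) hp'.1
  · intro hp
    obtain ⟨γ, hγ, y, hy, hyx⟩ : ∃ γ ∈ Γ, ∃ y ∈ L₀, γ y = p.1 := by
      simpa [← hcover] using fst_mem_convexCore_of_mem_Ktilde hp
    refine ⟨γ, hγ, (γ.symm p.1, γ.symm p.2),
      ⟨map_mem_Ktilde (hq _ (inv_mem hγ)) (hcone _ (inv_mem hγ)) hp, ?_⟩, by simp⟩
    rw [← hyx, γ.symm_apply_apply]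
    exact hy

/-- The diagonal action of a quasi-Fuchsian group `Γ` on the lifted trapped set `K̃` is
cocompact: there is a compact `L ⊆ K̃` with `Γ·L = K̃`. -/
theorem stmt15 (Γ : Subgroup GL4) (Λ : Set (Fin 4 → ℝ))
    (hΓ : IsQuasiFuchsian Γ Λ) :
    ∃ L : Set ((Fin 4 → ℝ) × (Fin 4 → ℝ)), L ⊆ Ktilde Λ ∧ IsCompact L ∧
      {p : (Fin 4 → ℝ) × (Fin 4 → ℝ) |
        ∃ γ ∈ Γ, ∃ p' ∈ L, p = (γ p'.1, γ p'.2)} = Ktilde Λ := by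
  obtain ⟨hΛ, hq, hcone, -, -, L₀, hL₀core, hL₀, hcover⟩ := hΓ
  have hneg : ∀ x ∈ L₀, ∀ ν ∈ Λ, qf x ν < 0 := fun x hx ν hν =>
    qf_neg_of_mem_convexCore hΛ (hL₀core hx) hν
  exact ⟨Ktilde Λ ∩ Prod.fst ⁻¹' L₀, inter_subset_left,
    isCompact_Ktilde_inter_fst_preimage hΛ.isCompact hL₀ hneg,
    orbit_Ktilde_inter_fst_preimage hq hcone hcover⟩
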